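/- arXiv:1712.00587 — 3 statements merged into one kernel-verified Lean document; each statement's English description precedes it below -/
import Mathlib

section
/- If Y is an infinite-dimensional closed subspace of a Banach space X, T : X → X is a bounded linear operator, and there exist constants λ > 0, D > 0 such that ‖T y‖ ≥ (1/D) e^{λ} ‖y‖ for all y ∈ Y, then T(B_X) cannot be covered by finitely many balls of radius e^{λ}/(4D); in particular ‖T‖_{ic(X)} ≥ e^{λ}/(4D). -/
open Metric

/-- The measure-of-noncompactness norm: infimum of all `r > 0` such that the image of the
closed unit ball can be covered by finitely many balls of radius `r`. -/
noncomputable def icNorm {X : Type*} [NormedAddCommGroup X] [NormedSpace ℝ X]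
    (A : X →L[ℝ] X) : ℝ :=
  sInf {r : ℝ | 0 < r ∧ ∃ s : Finset X, A '' closedBall 0 1 ⊆ ⋃ c ∈ s, closedBall c r}

/-! Infinitely many points at mutual distance `> 2r` inside `S` cannot share the finitely many
centres of a cover of `S` by `r`-balls; a bounded-below operator turns the Riesz sequence of
the infinite-dimensional subspace into such points inside `T(B_X)`. -/

theorem Metric.not_subset_biUnion_closedBall_of_pairwise_lt_dist {α ι : Type*}
    [PseudoMetricSpace α] [Infinite ι] {S : Set α} {r : ℝ} {u : ι → α} (hu : ∀ i, u i ∈ S)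
    (hsep : Pairwise fun i j => 2 * r < dist (u i) (u j)) (s : Finset α) :
    ¬S ⊆ ⋃ c ∈ s, closedBall c r := by
  intro hS
  have hcover : ∀ i, ∃ c ∈ s, u i ∈ closedBall c r := fun i => by
    simpa only [Set.mem_iUnion, exists_prop] using hS (hu i)
  choose c hcs hc using hcover
  obtain ⟨i, j, hij, hcij⟩ :=
    Finite.exists_ne_map_eq_of_infinite fun i => (⟨c i, hcs i⟩ : s)
  have hcij : c i = c j := congrArg Subtype.val hcij
  have hi := mem_closedBall.mp (hc i)
  have hj := mem_closedBall'.mp (hc j)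
  rw [hcij] at hi
  have := dist_triangle (u i) (c j) (u j)
  linarith [hsep hij]

theorem exists_seq_norm_le_one_lt_norm_sub {E : Type*} [NormedAddCommGroup E] [NormedSpace ℝ E]
    (h : ¬FiniteDimensional ℝ E) {δ : ℝ} (hδ : δ < 1) :
    ∃ f : ℕ → E, (∀ n, ‖f n‖ ≤ 1) ∧ Pairwise fun m n => δ < ‖f m - f n‖ := by
  obtain ⟨t, hδt, ht₁⟩ := exists_between (max_lt hδ one_pos)
  have ht₀ : 0 < t := (le_max_right δ 0).trans_lt hδt
  replace hδt : δ < t := (le_max_left δ 0).trans_lt hδt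
  have hR : 1 < t⁻¹ := (one_lt_inv₀ ht₀).mpr ht₁
  have hc : 1 < ‖(1 + t⁻¹) / 2‖ := by
    rw [Real.norm_of_nonneg (by positivity)]; linarith
  have hcR : ‖(1 + t⁻¹) / 2‖ < t⁻¹ := by
    rw [Real.norm_of_nonneg (by positivity)]; linarith
  obtain ⟨f, hf_le, hf_sep⟩ := exists_seq_norm_le_one_le_norm_sub' hc hcR h
  refine ⟨fun n => t • f n, fun n => ?_, fun m n hmn => ?_⟩
  · rw [norm_smul, Real.norm_of_nonneg ht₀.le]
    calc t * ‖f n‖ ≤ t * t⁻¹ := by gcongr; exact hf_le n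
      _ = 1 := mul_inv_cancel₀ ht₀.ne'
  · dsimp only
    rw [← smul_sub, norm_smul, Real.norm_of_nonneg ht₀.le]
    exact hδt.trans_le (le_mul_of_one_le_right ht₀.le (hf_sep hmn))

theorem not_exists_cover_image_closedBall_of_le_norm_apply {X F : Type*}
    [NormedAddCommGroup X] [NormedSpace ℝ X] [NormedAddCommGroup F] [NormedSpace ℝ F]
    (Y : Submodule ℝ X) (hY : ¬FiniteDimensional ℝ Y) (T : X →L[ℝ] F) {k r : ℝ} (hk : 0 < k)
    (hT : ∀ y ∈ Y, k * ‖y‖ ≤ ‖T y‖) (hr : r < k / 2) :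
    ¬∃ s : Finset F, T '' closedBall 0 1 ⊆ ⋃ c ∈ s, closedBall c r := by
  rintro ⟨s, hs⟩
  have hδ : 2 * r / k < 1 := by rw [div_lt_one hk]; linarith
  obtain ⟨f, hf_le, hf_sep⟩ := exists_seq_norm_le_one_lt_norm_sub hY hδ
  refine not_subset_biUnion_closedBall_of_pairwise_lt_dist (u := fun n => T (f n))
    (fun n => Set.mem_image_of_mem T (mem_closedBall_zero_iff.mpr (hf_le n)))
    (fun m n hmn => ?_) s hs
  calc 2 * r = k * (2 * r / k) := by field_simp
    _ < k * ‖f m - f n‖ := by gcongr; exact hf_sep hmn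
    _ ≤ ‖T (f m - f n)‖ := hT _ (f m - f n).2
    _ = dist (T (f m)) (T (f n)) := by rw [dist_eq_norm, ← map_sub]

theorem le_icNorm_of_not_exists_cover {X : Type*} [NormedAddCommGroup X] [NormedSpace ℝ X]
    {A : X →L[ℝ] X} {r : ℝ}
    (h : ¬∃ s : Finset X, A '' closedBall 0 1 ⊆ ⋃ c ∈ s, closedBall c r) : r ≤ icNorm A := by
  refine le_csInf ⟨‖A‖ + 1, by positivity, {0}, ?_⟩ fun b ⟨_, s, hs⟩ => ?_
  · rintro _ ⟨x, hx, rfl⟩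
    simp only [Finset.mem_singleton, Set.iUnion_iUnion_eq_left, mem_closedBall_zero_iff]
    linarith [A.unit_le_opNorm x (mem_closedBall_zero_iff.mp hx)]
  · by_contra! hbr
    exact h ⟨s, hs.trans (Set.iUnion₂_mono fun c _ => closedBall_subset_closedBall hbr.le)⟩

theorem not_finite_cover_of_expanding_general {X : Type*} [NormedAddCommGroup X] [NormedSpace ℝ X]
    (Y : Submodule ℝ X) (hY : ¬ FiniteDimensional ℝ Y)
    (T : X →L[ℝ] X) (lam D : ℝ) (hD : 0 < D)
    (hexp : ∀ y ∈ Y, (1 / D) * Real.exp lam * ‖y‖ ≤ ‖T y‖) :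
    (¬ ∃ s : Finset X, T '' closedBall 0 1 ⊆ ⋃ c ∈ s, closedBall c (Real.exp lam / (4 * D))) ∧
      Real.exp lam / (4 * D) ≤ icNorm T := by
  have hk : 0 < 1 / D * Real.exp lam := by positivity
  have hr : Real.exp lam / (4 * D) < 1 / D * Real.exp lam / 2 := by
    rw [one_div_mul_eq_div, div_div]
    exact div_lt_div_of_pos_left (Real.exp_pos lam) (by positivity) (by linarith)
  have hcover := not_exists_cover_image_closedBall_of_le_norm_apply Y hY T hk hexp hr
  exact ⟨hcover, le_icNorm_of_not_exists_cover hcover⟩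

/-- If `T` expands an infinite-dimensional closed subspace `Y` by a factor `(1/D) e^λ`, then
`T(B_X)` cannot be covered by finitely many balls of radius `e^λ/(4D)`; in particular the
measure-of-noncompactness norm of `T` is at least `e^λ/(4D)`. -/
theorem not_finite_cover_of_expanding {X : Type*} [NormedAddCommGroup X] [NormedSpace ℝ X]
    (Y : Submodule ℝ X) (hYcl : IsClosed (Y : Set X)) (hY : ¬ FiniteDimensional ℝ Y)
    (T : X →L[ℝ] X) (lam D : ℝ) (hlam : 0 < lam) (hD : 0 < D)
    (hexp : ∀ y ∈ Y, (1 / D) * Real.exp lam * ‖y‖ ≤ ‖T y‖) :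
    (¬ ∃ s : Finset X, T '' closedBall 0 1 ⊆ ⋃ c ∈ s, closedBall c (Real.exp lam / (4 * D))) ∧
      Real.exp lam / (4 * D) ≤ icNorm T :=
  not_finite_cover_of_expanding_general Y hY T lam D hD hexp
end

section
/- Suppose 𝒜 is a uniformly hyperbolic cocycle over a homeomorphism f of a compact space M with projections P(q), constants D, λ > 0, and suppose that for some q ∈ M, limsup_{n→∞} (1/n) log ‖𝒜(q,n)‖_{ic(X)} ≤ 0. Then Ker P(q) is finite-dimensional. -/
/-!
If `Ker P(q)` were infinite-dimensional, Riesz's lemma would give an infinite bounded family in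
it with pairwise distances at least `1`. The cocycle expands `Ker P(q)` at rate `e^{λn}/D`,
so the image of that family under `𝒜(q,n)` stays `≳ e^{λn}`-separated and
`‖𝒜(q,n)‖_{ic(X)} ≳ e^{λn}`, forcing the limsup to be at least `λ > 0`.
-/

open Metric Filter

/-- `𝒜` is a cocycle over `f` with continuous generator. -/
def IsCocycle {M : Type*} [TopologicalSpace M] {X : Type*} [NormedAddCommGroup X]
    [NormedSpace ℝ X] (f : M → M) (𝒜 : M → ℕ → X →L[ℝ] X) : Prop :=
  (∀ q, 𝒜 q 0 = ContinuousLinearMap.id ℝ X) ∧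
  (∀ q n m, 𝒜 q (n + m) = (𝒜 (f^[n] q) m).comp (𝒜 q n)) ∧
  Continuous fun q => 𝒜 q 1

/-- `𝒜` is uniformly hyperbolic over the homeomorphism `f`, with projections `P` and
constants `D`, `lam`.  The backward estimate `‖𝒜(q,-n)(Id - P q)‖ ≤ D e^{-lam n}` is
expressed equivalently as `‖u‖ ≤ D e^{-lam n} ‖𝒜(q,n) u‖` for `u ∈ Ker P q`. -/
def IsUHWith {M : Type*} [TopologicalSpace M] {X : Type*} [NormedAddCommGroup X]
    [NormedSpace ℝ X] (f : M ≃ₜ M) (𝒜 : M → ℕ → X →L[ℝ] X)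
    (P : M → X →L[ℝ] X) (D lam : ℝ) : Prop :=
  0 < D ∧ 0 < lam ∧
  (∀ q, (P q).comp (P q) = P q) ∧
  (∀ q, (𝒜 q 1).comp (P q) = (P (f q)).comp (𝒜 q 1)) ∧
  Continuous P ∧
  (∀ q, Set.BijOn (𝒜 q 1) (LinearMap.ker (P q : X →ₗ[ℝ] X) : Set X) (LinearMap.ker (P (f q) : X →ₗ[ℝ] X) : Set X)) ∧
  (∀ q (n : ℕ), ‖(𝒜 q n).comp (P q)‖ ≤ D * Real.exp (-lam * n)) ∧
  (∀ q (n : ℕ), ∀ u ∈ LinearMap.ker (P q : X →ₗ[ℝ] X), ‖u‖ ≤ D * Real.exp (-lam * n) * ‖𝒜 q n u‖)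

section IcNorm

variable {X : Type*} [NormedAddCommGroup X] [NormedSpace ℝ X]

lemma icNorm_nonneg (A : X →L[ℝ] X) : 0 ≤ icNorm A :=
  Real.sInf_nonneg fun _ hr => hr.1.le

lemma image_closedBall_subset_biUnion_singleton (A : X →L[ℝ] X) {r : ℝ} (hr : ‖A‖ ≤ r) :
    A '' closedBall 0 1 ⊆ ⋃ c ∈ ({0} : Finset X), closedBall c r := by
  rintro _ ⟨x, hx, rfl⟩
  rw [Finset.set_biUnion_singleton, mem_closedBall_zero_iff]
  exact (A.le_of_opNorm_le_of_le hr (mem_closedBall_zero_iff.mp hx)).trans_eq (mul_one r)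

lemma icNorm_le_norm (A : X →L[ℝ] X) : icNorm A ≤ ‖A‖ :=
  le_of_forall_gt_imp_ge_of_dense fun _ hr =>
    csInf_le ⟨0, fun _ hs => hs.1.le⟩
      ⟨(norm_nonneg A).trans_lt hr, {0}, image_closedBall_subset_biUnion_singleton A hr.le⟩

lemma exists_pos_mul_le_icNorm {V : Submodule ℝ X} (hV : ¬ FiniteDimensional ℝ V) :
    ∃ κ > 0, ∀ (A : X →L[ℝ] X) (c : ℝ), 0 ≤ c → (∀ u ∈ V, c * ‖u‖ ≤ ‖A u‖) →
      κ * c ≤ icNorm A := by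
  obtain ⟨R, g, hR, hg_le, hg_sep⟩ := exists_seq_norm_le_one_le_norm_sub hV
  have hR₀ : 0 < R := one_pos.trans hR
  refine ⟨(2 * R)⁻¹, by positivity, fun A c hc hA => ?_⟩
  refine le_csInf ⟨‖A‖ + 1, by positivity, {0},
    image_closedBall_subset_biUnion_singleton A (le_add_of_nonneg_right zero_le_one)⟩ ?_
  rintro r ⟨-, s, hs⟩
  have hmem (i : ℕ) : ∃ x ∈ s, A (R⁻¹ • (g i : X)) ∈ closedBall x r := by
    have hgi : R⁻¹ • (g i : X) ∈ closedBall (0 : X) 1 := by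
      rw [mem_closedBall_zero_iff, norm_smul, Real.norm_of_nonneg (by positivity),
        inv_mul_le_iff₀ hR₀, mul_one]
      exact hg_le i
    simpa only [Set.mem_iUnion, exists_prop] using hs ⟨_, hgi, rfl⟩
  choose x hxs hx using hmem
  obtain ⟨i, j, hij, hxij⟩ := Finite.exists_ne_map_eq_of_infinite fun i => (⟨x i, hxs i⟩ : s)
  have hsep : R⁻¹ ≤ ‖R⁻¹ • ((g i : X) - g j)‖ := by
    rw [norm_smul, Real.norm_of_nonneg (by positivity)]
    exact le_mul_of_one_le_right (by positivity) (hg_sep hij)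
  have hclose : ‖A (R⁻¹ • ((g i : X) - g j))‖ ≤ 2 * r := by
    rw [smul_sub, map_sub, ← dist_eq_norm, two_mul]
    have hj : A (R⁻¹ • (g j : X)) ∈ closedBall (x i) r := by
      rw [show x i = x j from congrArg Subtype.val hxij]; exact hx j
    exact (dist_triangle_right _ _ (x i)).trans (add_le_add (hx i) hj)
  have hcr : c * R⁻¹ ≤ 2 * r :=
    (mul_le_mul_of_nonneg_left hsep hc).trans <|
      (hA _ (V.smul_mem _ (sub_mem (g i).2 (g j).2))).trans hclose
  calc (2 * R)⁻¹ * c = c * R⁻¹ / 2 := by ring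
    _ ≤ r := by linarith

end IcNorm

lemma log_div_le_log_of_le_pow {u : ℕ → ℝ} {K : ℝ} (hK : 1 ≤ K) (hu₀ : ∀ n, 0 ≤ u n)
    (hu : ∀ n, u n ≤ K ^ n) (n : ℕ) : Real.log (u n) / n ≤ Real.log K := by
  have hlogK : 0 ≤ Real.log K := Real.log_nonneg hK
  refine div_le_of_le_mul₀ n.cast_nonneg hlogK ?_
  rcases (hu₀ n).eq_or_lt with hzero | hpos
  · rw [← hzero, Real.log_zero]
    positivity
  · rw [mul_comm, ← Real.log_pow]
    exact Real.log_le_log hpos (hu n)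

lemma le_limsup_log_div_of_mul_exp_le {u : ℕ → ℝ} {κ lam : ℝ} (hκ : 0 < κ)
    (hu : ∀ n : ℕ, κ * Real.exp (lam * n) ≤ u n)
    (hbdd : IsBoundedUnder (· ≤ ·) atTop fun n : ℕ => Real.log (u n) / n) :
    lam ≤ limsup (fun n : ℕ => Real.log (u n) / n) atTop := by
  have hlim : Tendsto (fun n : ℕ => lam + Real.log κ / n) atTop (nhds lam) := by
    simpa using tendsto_const_nhds.add (tendsto_const_div_atTop_nhds_zero_nat (Real.log κ))
  have hle : ∀ᶠ n : ℕ in atTop, lam + Real.log κ / n ≤ Real.log (u n) / n := by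
    filter_upwards [eventually_gt_atTop 0] with n hn
    have hn' : (0 : ℝ) < n := Nat.cast_pos.mpr hn
    have hlog : Real.log κ + lam * n ≤ Real.log (u n) := by
      rw [← Real.log_exp (lam * n), ← Real.log_mul hκ.ne' (Real.exp_pos _).ne']
      exact Real.log_le_log (by positivity) (hu n)
    rw [le_div_iff₀ hn', add_mul, div_mul_cancel₀ _ hn'.ne']
    linarith
  exact hlim.limsup_eq.ge.trans (limsup_le_limsup hle hlim.isCoboundedUnder_le hbdd)

lemma IsCocycle.exists_norm_le_pow {M : Type*} [TopologicalSpace M] [CompactSpace M]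
    {X : Type*} [NormedAddCommGroup X] [NormedSpace ℝ X] {f : M → M}
    {𝒜 : M → ℕ → X →L[ℝ] X} (h𝒜 : IsCocycle f 𝒜) :
    ∃ K, 1 ≤ K ∧ ∀ q n, ‖𝒜 q n‖ ≤ K ^ n := by
  obtain ⟨h_zero, h_add, h_cont⟩ := h𝒜
  obtain ⟨C, hC⟩ := isCompact_univ.exists_bound_of_continuousOn h_cont.continuousOn
  refine ⟨max C 1, le_max_right C 1, fun q n => ?_⟩
  induction n with
  | zero => simpa [h_zero q] using ContinuousLinearMap.norm_id_le
  | succ n ih =>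
    rw [h_add q n 1, pow_succ']
    exact (ContinuousLinearMap.opNorm_comp_le _ _).trans <|
      mul_le_mul ((hC _ trivial).trans (le_max_left C 1)) ih (norm_nonneg _) (by positivity)

lemma IsUHWith.exists_mul_exp_le_icNorm {M : Type*} [TopologicalSpace M] {X : Type*}
    [NormedAddCommGroup X] [NormedSpace ℝ X] {f : M ≃ₜ M} {𝒜 : M → ℕ → X →L[ℝ] X}
    {P : M → X →L[ℝ] X} {D lam : ℝ} (hUH : IsUHWith f 𝒜 P D lam) {q : M}
    (hker : ¬ FiniteDimensional ℝ (LinearMap.ker (P q : X →ₗ[ℝ] X))) :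
    ∃ κ > 0, ∀ n : ℕ, κ * Real.exp (lam * n) ≤ icNorm (𝒜 q n) := by
  obtain ⟨hD, -, -, -, -, -, -, h_expand⟩ := hUH
  obtain ⟨κ, hκ, h_icNorm⟩ := exists_pos_mul_le_icNorm hker
  refine ⟨κ * D⁻¹, by positivity, fun n => ?_⟩
  have hexp : Real.exp (lam * n) * Real.exp (-lam * n) = 1 := by
    rw [← Real.exp_add, neg_mul, add_neg_cancel, Real.exp_zero]
  calc κ * D⁻¹ * Real.exp (lam * n) = κ * (D⁻¹ * Real.exp (lam * n)) := mul_assoc _ _ _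
    _ ≤ icNorm (𝒜 q n) := h_icNorm _ _ (by positivity) fun u hu => by
        calc D⁻¹ * Real.exp (lam * n) * ‖u‖
            ≤ D⁻¹ * Real.exp (lam * n) * (D * Real.exp (-lam * n) * ‖𝒜 q n u‖) := by
              gcongr; exact h_expand q n u hu
          _ = D⁻¹ * D * (Real.exp (lam * n) * Real.exp (-lam * n)) * ‖𝒜 q n u‖ := by ring
          _ = ‖𝒜 q n u‖ := by rw [inv_mul_cancel₀ hD.ne', hexp, one_mul, one_mul]

/-- If a uniformly hyperbolic cocycle satisfies
`limsup (1/n) log ‖𝒜(q,n)‖_{ic(X)} ≤ 0` at some point `q`, then `Ker P q` is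
finite-dimensional. -/
theorem finiteDimensional_ker_of_limsup_icNorm_nonpos {M : Type*} [TopologicalSpace M]
    [CompactSpace M] {X : Type*} [NormedAddCommGroup X] [NormedSpace ℝ X]
    (f : M ≃ₜ M) (𝒜 : M → ℕ → X →L[ℝ] X) (hcoc : IsCocycle f 𝒜)
    (P : M → X →L[ℝ] X) (D lam : ℝ) (hUH : IsUHWith f 𝒜 P D lam) (q : M)
    (h : limsup (fun n : ℕ => Real.log (icNorm (𝒜 q n)) / n) atTop ≤ 0) :
    FiniteDimensional ℝ (LinearMap.ker (P q : X →ₗ[ℝ] X)) := by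
  by_contra hker
  obtain ⟨K, hK, h_norm⟩ := hcoc.exists_norm_le_pow
  obtain ⟨κ, hκ, h_growth⟩ := hUH.exists_mul_exp_le_icNorm hker
  -- Without an upper bound, `limsup` in `ℝ` is the junk value `0` and `h` says nothing.
  have hbdd : IsBoundedUnder (· ≤ ·) atTop fun n : ℕ => Real.log (icNorm (𝒜 q n)) / n :=
    isBoundedUnder_of ⟨_, log_div_le_log_of_le_pow hK (fun n => icNorm_nonneg _)
      fun n => (icNorm_le_norm _).trans (h_norm q n)⟩
  linarith [le_limsup_log_div_of_mul_exp_le hκ h_growth hbdd, hUH.2.1]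
end

section
/- Suppose Σ ⊂ ℝ is a closed set with Σ ⊆ (κ, S] for some κ ∈ [−∞, ∞) and S < ∞, and suppose that for every c ∈ (κ, ∞) \ Σ, the intersection Σ ∩ [c, ∞) is a union of finitely many closed intervals. If Σ is nonempty and is not a finite union of intervals of the forms ⋃_{n=1}^k [a_n,b_n] or ⋃_{n=1}^{k−1}[a_n,b_n] ∪ (κ,b_k], then either Σ = ⋃_{n=1}^∞ [a_n,b_n] with b_1 ≥ a_1 > b_2 ≥ a_2 > ⋯ and lim a_n = κ, or Σ = ⋃_{n=1}^∞ [a_n,b_n] ∪ (κ, b_∞] with b_∞ = lim a_n > κ. -/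
open Filter Set

/-!
Enumerate the components of `Σ` from the right: `b₀ = max Σ`, `[a₀, b₀]` is the component of
`b₀`, `b₁ = max (Σ ∩ (-∞, a₀))`, and so on. Each `aₙ` is isolated from the left in `Σ`: otherwise
some `c ∉ Σ` lies just left of `aₙ`, and one of the finitely many closed intervals making up
`Σ ∩ [c, ∞)` would reach past `aₙ` to the left. If the enumeration stops, because a component is
unbounded below or nothing of `Σ` lies to its left, `Σ` has one of the excluded finite forms.
Otherwise `aₙ` decreases to some `L ≥ κ`. When `L > κ`, every `c ∈ (κ, L]` lies in `Σ`: for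
`c ∉ Σ` the finitely many intervals of `Σ ∩ [c, ∞)` cannot separate the infinitely many `aₙ`.
-/

lemma exists_Icc_subset_of_mem_closure_inter_Iio {ι : Type*} [Finite ι] {a b : ι → ℝ} {p : ℝ}
    (hp : p ∈ closure ((⋃ i, Icc (a i) (b i)) ∩ Iio p)) :
    ∃ y < p, Icc y p ⊆ ⋃ i, Icc (a i) (b i) := by
  rw [iUnion_inter, closure_iUnion_of_finite, mem_iUnion] at hp
  obtain ⟨i, hi⟩ := hp
  obtain ⟨x, ⟨hax, -⟩, hxp⟩ := closure_nonempty_iff.mp ⟨p, hi⟩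
  have hpb : p ≤ b i := (closure_minimal inter_subset_left isClosed_Icc hi).2
  exact ⟨a i, hax.trans_lt hxp, (Icc_subset_Icc_right hpb).trans (subset_iUnion_of_subset i le_rfl)⟩

lemma Antitone.exists_Icc_succ_subset {ι : Type*} [Finite ι] {a b : ι → ℝ} {f : ℕ → ℝ}
    (hf : Antitone f) (hmem : ∀ n, f n ∈ ⋃ i, Icc (a i) (b i)) :
    ∃ n, Icc (f (n + 1)) (f n) ⊆ ⋃ i, Icc (a i) (b i) := by
  choose F hF using fun n => mem_iUnion.mp (hmem n)
  obtain ⟨m, n, hmn, hFmn⟩ := Finite.exists_ne_map_eq_of_infinite F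
  wlog hlt : n < m generalizing m n
  · exact this n m hmn.symm hFmn.symm (lt_of_le_of_ne (not_lt.mp hlt) hmn)
  refine ⟨n, fun x hx => mem_iUnion.mpr ⟨F n, ?_, hx.2.trans (hF n).2⟩⟩
  calc a (F n) = a (F m) := by rw [hFmn]
    _ ≤ f m := (hF m).1
    _ ≤ f (n + 1) := hf hlt
    _ ≤ x := hx.1

lemma lt_of_le_of_succ_lt {α : Type*} [Preorder α] {a b : ℕ → α} {n : ℕ}
    (hab : ∀ i < n, a i ≤ b i) (hba : ∀ i < n, b (i + 1) < a i) {i j : ℕ} (hij : i < j)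
    (hjn : j ≤ n) : b j < a i := by
  induction j, hij using Nat.le_induction with
  | base => exact hba i (by omega)
  | succ j hij ih => exact (hba j (by omega)).trans_le ((hab j (by omega)).trans (ih (by omega)).le)

lemma EReal.eq_bot_of_forall_le_lt {κ : EReal} {b : ℝ} (h : ∀ x ≤ b, κ < x) : κ = ⊥ := by
  induction κ using EReal.rec with
  | bot => rfl
  | coe r =>
    exact absurd (EReal.coe_lt_coe_iff.mp (h (min r b) (min_le_right r b))) (min_le_left r b).not_gt
  | top => exact absurd (h b le_rfl) not_top_lt

lemma inter_Ioi_sSup_inter_Iio {s : Set ℝ} {a : ℝ} (h : sSup (s ∩ Iio a) < a) :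
    s ∩ Ioi (sSup (s ∩ Iio a)) = s ∩ Ici a := by
  ext x
  refine ⟨fun ⟨hx, hsx⟩ => ⟨hx, mem_Ici.mpr (not_lt.mp fun hxa => ?_)⟩,
    fun ⟨hx, hax⟩ => ⟨hx, h.trans_le hax⟩⟩
  exact (le_csSup (bddAbove_Iio.mono inter_subset_right) ⟨hx, hxa⟩).not_gt hsx

def IsFiniteUnionIcc (t : Set ℝ) : Prop :=
  ∃ (k : ℕ) (a b : Fin k → ℝ), t = ⋃ i, Icc (a i) (b i)

/-- Left end of the component of `s` through `b`; junk (`0`) when that component is unbounded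
below. -/
noncomputable def leftEnd (s : Set ℝ) (b : ℝ) : ℝ := sInf {y | Icc y b ⊆ s}

section LeftEnd

variable {s : Set ℝ} {b : ℝ}

lemma Iic_subset_of_not_bddBelow (h : ¬BddBelow {y | Icc y b ⊆ s}) : Iic b ⊆ s := fun x hx =>
  let ⟨_, hy, hyx⟩ := not_bddBelow_iff.mp h x
  hy ⟨hyx.le, hx⟩

variable (hs : IsClosed s) (hb : b ∈ s) (hbdd : BddBelow {y | Icc y b ⊆ s})
include hb hbdd

lemma leftEnd_le : leftEnd s b ≤ b :=
  csInf_le hbdd (show Icc b b ⊆ s by simpa using hb)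

include hs in
lemma Icc_leftEnd_subset : Icc (leftEnd s b) b ⊆ s := by
  have hIoc : Ioc (leftEnd s b) b ⊆ s := fun x hx =>
    let ⟨_, hy, hyx⟩ := exists_lt_of_csInf_lt ⟨b, show Icc b b ⊆ s by simpa using hb⟩ hx.1
    hy ⟨hyx.le, hx.2⟩
  rcases (leftEnd_le hb hbdd).eq_or_lt with h | h
  · simpa [h] using hb
  · rw [← closure_Ioc h.ne]
    exact closure_minimal hIoc hs

include hs in
lemma inter_Ici_leftEnd : s ∩ Ici (leftEnd s b) = s ∩ Ioi b ∪ Icc (leftEnd s b) b := by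
  ext x
  constructor
  · rintro ⟨hx, hax⟩
    rcases le_or_gt x b with hxb | hxb
    exacts [Or.inr ⟨hax, hxb⟩, Or.inl ⟨hx, hxb⟩]
  · rintro (⟨hx, hxb⟩ | hx)
    exacts [⟨hx, (leftEnd_le hb hbdd).trans hxb.le⟩, ⟨Icc_leftEnd_subset hs hb hbdd hx, hx.1⟩]

include hs in
lemma sSup_inter_Iio_leftEnd_lt {κ : EReal} (hκ : ∀ x ∈ s, κ < x)
    (hfin : ∀ c : ℝ, κ < c → c ∉ s → IsFiniteUnionIcc (s ∩ Ici c))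
    (hne : (s ∩ Iio (leftEnd s b)).Nonempty) :
    sSup (s ∩ Iio (leftEnd s b)) < leftEnd s b := by
  set a := leftEnd s b
  have hnot : ∀ y < a, ¬Icc y a ⊆ s := fun y hya hy => by
    have : Icc y b ⊆ s := by
      rw [← Icc_union_Icc_eq_Icc hya.le (leftEnd_le hb hbdd)]
      exact union_subset hy (Icc_leftEnd_subset hs hb hbdd)
    exact (csInf_le hbdd this).not_gt hya
  refine (csSup_le hne fun x hx => hx.2.le).lt_of_ne fun hsup => ?_
  obtain ⟨x₀, hx₀, hx₀a : x₀ < a⟩ := hne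
  obtain ⟨c, ⟨hx₀c, hca⟩, hc⟩ : ∃ c ∈ Ioo x₀ a, c ∉ s := by
    by_contra! h
    exact hnot x₀ hx₀a (closure_Ioo hx₀a.ne ▸ closure_minimal h hs)
  obtain ⟨k, α, β, hαβ⟩ := hfin c ((hκ x₀ hx₀).trans (EReal.coe_lt_coe_iff.mpr hx₀c)) hc
  have ha : a ∈ closure (s ∩ Ici c ∩ Iio a) := by
    have hcl := csSup_mem_closure (s := s ∩ Iio a) ⟨x₀, hx₀, hx₀a⟩
      (bddAbove_Iio.mono inter_subset_right)
    rw [hsup] at hcl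
    refine closure_mono ?_ (isOpen_Ioi.inter_closure ⟨hca, hcl⟩)
    exact fun x ⟨hcx, hx, hxa⟩ => ⟨⟨hx, mem_Ici.mpr (le_of_lt hcx)⟩, hxa⟩
  rw [hαβ] at ha
  obtain ⟨y, hya, hy⟩ := exists_Icc_subset_of_mem_closure_inter_Iio ha
  exact hnot y hya (hy.trans (hαβ ▸ inter_subset_left))

end LeftEnd

/-- `[leftEnds s n, rightEnds s n]` is the `n`-th component of `s`, counted from the right. -/
noncomputable def rightEnds (s : Set ℝ) : ℕ → ℝ
  | 0 => sSup s
  | n + 1 => sSup (s ∩ Iio (leftEnd s (rightEnds s n)))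

noncomputable def leftEnds (s : Set ℝ) (n : ℕ) : ℝ := leftEnd s (rightEnds s n)

def HasNextComponent (s : Set ℝ) (n : ℕ) : Prop :=
  BddBelow {y | Icc y (rightEnds s n) ⊆ s} ∧ (s ∩ Iio (leftEnds s n)).Nonempty

lemma HasNextComponent.rightEnds_succ {s : Set ℝ} {κ : EReal} {n : ℕ}
    (h : HasNextComponent s n) (hs : IsClosed s) (hκ : ∀ x ∈ s, κ < x)
    (hfin : ∀ c : ℝ, κ < c → c ∉ s → IsFiniteUnionIcc (s ∩ Ici c)) (hn : rightEnds s n ∈ s) :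
    rightEnds s (n + 1) ∈ s ∧ rightEnds s (n + 1) < leftEnds s n :=
  ⟨closure_minimal inter_subset_left hs
      (csSup_mem_closure h.2 (bddAbove_Iio.mono inter_subset_right)),
    sSup_inter_Iio_leftEnd_lt hs hn h.1 hκ hfin h.2⟩

structure IsSackerSellSet (s : Set ℝ) (κ : EReal) : Prop where
  isClosed : IsClosed s
  bddAbove : BddAbove s
  nonempty : s.Nonempty
  lt_of_mem : ∀ x ∈ s, κ < x
  finite_inter_Ici : ∀ c : ℝ, κ < c → c ∉ s → IsFiniteUnionIcc (s ∩ Ici c)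

namespace IsSackerSellSet

variable {s : Set ℝ} {κ : EReal} (hS : IsSackerSellSet s κ)
include hS

section Finite

variable {n : ℕ} (hreg : ∀ i < n, HasNextComponent s i)
include hreg

lemma rightEnds_mem : rightEnds s n ∈ s := by
  induction n with
  | zero => exact hS.isClosed.csSup_mem hS.nonempty hS.bddAbove
  | succ n ih =>
    have hmem := ih fun i hi => hreg i (hi.trans n.lt_succ_self)
    exact ((hreg n n.lt_succ_self).rightEnds_succ hS.isClosed hS.lt_of_mem hS.finite_inter_Ici
      hmem).1

lemma leftEnds_le_rightEnds (hn : BddBelow {y | Icc y (rightEnds s n) ⊆ s}) :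
    leftEnds s n ≤ rightEnds s n :=
  leftEnd_le (hS.rightEnds_mem hreg) hn

lemma rightEnds_lt_leftEnds {i j : ℕ} (hij : i < j) (hjn : j ≤ n) :
    rightEnds s j < leftEnds s i := by
  have hreg' : ∀ i < n, ∀ j < i, HasNextComponent s j := fun i hi j hj => hreg j (hj.trans hi)
  refine lt_of_le_of_succ_lt (fun i hi => ?_) (fun i hi => ?_) hij hjn
  · exact hS.leftEnds_le_rightEnds (hreg' i hi) (hreg i hi).1
  · exact ((hreg i hi).rightEnds_succ hS.isClosed hS.lt_of_mem hS.finite_inter_Ici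
      (hS.rightEnds_mem (hreg' i hi))).2

lemma inter_Ioi_rightEnds :
    s ∩ Ioi (rightEnds s n) = ⋃ i : Fin n, Icc (leftEnds s i) (rightEnds s i) := by
  induction n with
  | zero =>
    rw [iUnion_of_empty]
    exact eq_empty_of_forall_notMem fun x ⟨hx, hxs⟩ => (le_csSup hS.bddAbove hx).not_gt hxs
  | succ n ih =>
    have hreg' : ∀ i < n, HasNextComponent s i := fun i hi => hreg i (hi.trans n.lt_succ_self)
    have hmem := hS.rightEnds_mem hreg'
    have hstep := (hreg n n.lt_succ_self).rightEnds_succ hS.isClosed hS.lt_of_mem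
      hS.finite_inter_Ici hmem
    simp only [iUnion_fin_add_one_eq_iUnion_castSucc, Function.comp_def, Fin.val_castSucc,
      Fin.val_last]
    rw [← ih hreg']
    exact (inter_Ioi_sSup_inter_Iio hstep.2).trans
      (inter_Ici_leftEnd hS.isClosed hmem (hreg n n.lt_succ_self).1)

lemma exists_iUnion_Icc_union_of_not_bddBelow (h : ¬BddBelow {y | Icc y (rightEnds s n) ⊆ s}) :
    ∃ (k : ℕ) (a b : Fin k → ℝ) (c : ℝ), (∀ i, a i ≤ b i) ∧
      (∀ i j, i < j → b j < a i) ∧ κ < (c : EReal) ∧ (∀ i, c < a i) ∧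
      s = (⋃ i, Icc (a i) (b i)) ∪ {x : ℝ | κ < (x : EReal) ∧ x ≤ c} := by
  have hIic := Iic_subset_of_not_bddBelow h
  have hκ_bot : κ = ⊥ := EReal.eq_bot_of_forall_le_lt fun x hx => hS.lt_of_mem x (hIic hx)
  refine ⟨n, fun i => leftEnds s i, fun i => rightEnds s i, rightEnds s n, fun i => ?_,
    fun i j hij => hS.rightEnds_lt_leftEnds hreg hij j.2.le, by simp [hκ_bot],
    fun i => hS.rightEnds_lt_leftEnds hreg i.2 le_rfl, ?_⟩
  · exact hS.leftEnds_le_rightEnds (fun j hj => hreg j (hj.trans i.2)) (hreg i i.2).1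
  rw [← hS.inter_Ioi_rightEnds hreg]
  calc s = s ∩ Ioi (rightEnds s n) ∪ s ∩ Iic (rightEnds s n) := by
        rw [← inter_union_distrib_left, union_comm, Iic_union_Ioi, inter_univ]
    _ = _ := by
        rw [inter_eq_right.mpr hIic]
        simp [hκ_bot, Iic_def]

lemma exists_iUnion_Icc_of_inter_Iio_eq_empty (hn : BddBelow {y | Icc y (rightEnds s n) ⊆ s})
    (h : s ∩ Iio (leftEnds s n) = ∅) :
    ∃ (k : ℕ) (a b : Fin k → ℝ), (∀ i, a i ≤ b i) ∧
      (∀ i j, i < j → b j < a i) ∧ (∀ i, κ < (a i : EReal)) ∧ s = ⋃ i, Icc (a i) (b i) := by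
  have hreg' : ∀ i < n + 1, ∀ j < i, HasNextComponent s j := fun i hi j hj => hreg j (by omega)
  have hbdd' : ∀ i < n + 1, BddBelow {y | Icc y (rightEnds s i) ⊆ s} := fun i hi =>
    (Nat.lt_succ_iff_lt_or_eq.mp hi).elim (fun hi => (hreg i hi).1) (· ▸ hn)
  have hab : ∀ i < n + 1, leftEnds s i ≤ rightEnds s i := fun i hi =>
    hS.leftEnds_le_rightEnds (hreg' i hi) (hbdd' i hi)
  refine ⟨n + 1, fun i => leftEnds s i, fun i => rightEnds s i, fun i => hab i i.2,
    fun i j hij => hS.rightEnds_lt_leftEnds hreg hij (Nat.lt_succ_iff.mp j.2),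
    fun i => hS.lt_of_mem _ (Icc_leftEnd_subset hS.isClosed (hS.rightEnds_mem (hreg' i i.2))
      (hbdd' i i.2) ⟨le_rfl, hab i i.2⟩), ?_⟩
  calc s = s ∩ Ici (leftEnds s n) :=
        (inter_eq_left.mpr fun x hx => mem_Ici.mpr (not_lt.mp fun hlt => h.subset ⟨hx, hlt⟩)).symm
    _ = s ∩ Ioi (rightEnds s n) ∪ Icc (leftEnds s n) (rightEnds s n) :=
        inter_Ici_leftEnd hS.isClosed (hS.rightEnds_mem hreg) hn
    _ = _ := by
        rw [hS.inter_Ioi_rightEnds hreg, iUnion_fin_add_one_eq_iUnion_castSucc]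
        rfl

end Finite

section Infinite

variable (hreg : ∀ n, HasNextComponent s n)
include hreg

lemma leftEnds_le_rightEnds_of_forall (n : ℕ) : leftEnds s n ≤ rightEnds s n :=
  hS.leftEnds_le_rightEnds (fun i _ => hreg i) (hreg n).1

lemma Icc_leftEnds_subset (n : ℕ) : Icc (leftEnds s n) (rightEnds s n) ⊆ s :=
  Icc_leftEnd_subset hS.isClosed (hS.rightEnds_mem fun i _ => hreg i) (hreg n).1

lemma rightEnds_lt_leftEnds_of_lt {m n : ℕ} (h : m < n) : rightEnds s n < leftEnds s m :=
  hS.rightEnds_lt_leftEnds (fun i _ => hreg i) h le_rfl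

lemma strictAnti_leftEnds : StrictAnti (leftEnds s) :=
  strictAnti_nat_of_succ_lt fun n => (hS.leftEnds_le_rightEnds_of_forall hreg (n + 1)).trans_lt
    (hS.rightEnds_lt_leftEnds_of_lt hreg n.lt_succ_self)

lemma mem_iUnion_of_leftEnds_lt {x : ℝ} (hx : x ∈ s) {n : ℕ} (hn : leftEnds s n < x) :
    x ∈ ⋃ n, Icc (leftEnds s n) (rightEnds s n) := by
  have hx' : x ∈ s ∩ Ioi (rightEnds s (n + 1)) :=
    ⟨hx, (hS.rightEnds_lt_leftEnds_of_lt hreg n.lt_succ_self).trans hn⟩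
  rw [hS.inter_Ioi_rightEnds fun i _ => hreg i] at hx'
  obtain ⟨i, hi⟩ := mem_iUnion.mp hx'
  exact mem_iUnion.mpr ⟨i, hi⟩

lemma mem_of_forall_lt_leftEnds {c : ℝ} (hc : κ < c) (hlt : ∀ n, c < leftEnds s n) : c ∈ s := by
  by_contra hcs
  obtain ⟨k, α, β, hαβ⟩ := hS.finite_inter_Ici c hc hcs
  have hmem : ∀ n, leftEnds s n ∈ ⋃ i, Icc (α i) (β i) := fun n => hαβ ▸
    ⟨hS.Icc_leftEnds_subset hreg n ⟨le_rfl, hS.leftEnds_le_rightEnds_of_forall hreg n⟩, (hlt n).le⟩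
  obtain ⟨n, hn⟩ := (hS.strictAnti_leftEnds hreg).antitone.exists_Icc_succ_subset hmem
  obtain ⟨w, hw₁, hw₂⟩ := exists_between (hS.rightEnds_lt_leftEnds_of_lt hreg n.lt_succ_self)
  have hw : w ∈ s ∩ Ici c :=
    hαβ ▸ hn ⟨(hS.leftEnds_le_rightEnds_of_forall hreg _).trans hw₁.le, hw₂.le⟩
  exact (le_csSup (bddAbove_Iio.mono inter_subset_right) ⟨hw.1, hw₂⟩).not_gt hw₁

theorem eq_iUnion_Icc_or_eq_iUnion_Icc_union :
    (∃ a b : ℕ → ℝ, (∀ n, a n ≤ b n) ∧ (∀ n m, n < m → b m < a n) ∧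
        Tendsto (fun n => ((a n : ℝ) : EReal)) atTop (nhds κ) ∧
        s = ⋃ n, Icc (a n) (b n)) ∨
      (∃ (a b : ℕ → ℝ) (binf : ℝ), (∀ n, a n ≤ b n) ∧ (∀ n m, n < m → b m < a n) ∧
        Tendsto a atTop (nhds binf) ∧ κ < (binf : EReal) ∧
        s = (⋃ n, Icc (a n) (b n)) ∪ {x : ℝ | κ < (x : EReal) ∧ x ≤ binf}) := by
  have hanti := hS.strictAnti_leftEnds hreg
  have hsub : ⋃ n, Icc (leftEnds s n) (rightEnds s n) ⊆ s :=
    iUnion_subset (hS.Icc_leftEnds_subset hreg)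
  set L := ⨅ n, (leftEnds s n : EReal)
  have hL : Tendsto (fun n => (leftEnds s n : EReal)) atTop (nhds L) :=
    tendsto_atTop_iInf fun _ _ h => EReal.coe_le_coe_iff.mpr (hanti.antitone h)
  have hκL : κ ≤ L := le_iInf fun n =>
    (hS.lt_of_mem _ (hS.Icc_leftEnds_subset hreg n
      ⟨le_rfl, hS.leftEnds_le_rightEnds_of_forall hreg n⟩)).le
  have hcover : ∀ x ∈ s, L < x → x ∈ ⋃ n, Icc (leftEnds s n) (rightEnds s n) := fun x hx hLx =>
    let ⟨_, hn⟩ := iInf_lt_iff.mp hLx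
    hS.mem_iUnion_of_leftEnds_lt hreg hx (EReal.coe_lt_coe_iff.mp hn)
  rcases hκL.eq_or_lt with hκL | hκL
  · exact .inl ⟨leftEnds s, rightEnds s, hS.leftEnds_le_rightEnds_of_forall hreg,
      fun _ _ => hS.rightEnds_lt_leftEnds_of_lt hreg, hκL ▸ hL,
      subset_antisymm (fun x hx => hcover x hx (hκL ▸ hS.lt_of_mem x hx)) hsub⟩
  have hL_top : L ≠ ⊤ :=
    ((iInf_le (fun n => (leftEnds s n : EReal)) 0).trans_lt (EReal.coe_lt_top _)).ne
  obtain ⟨p, hp⟩ : ∃ p : ℝ, (p : EReal) = L := ⟨L.toReal, EReal.coe_toReal hL_top hκL.ne_bot⟩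
  rw [← hp] at hL hκL hcover
  have hp_lt : ∀ n, p < leftEnds s n := fun n => EReal.coe_lt_coe_iff.mp <|
    hp ▸ (iInf_le _ (n + 1)).trans_lt (EReal.coe_lt_coe_iff.mpr (hanti n.lt_succ_self))
  refine .inr ⟨leftEnds s, rightEnds s, p, hS.leftEnds_le_rightEnds_of_forall hreg,
    fun _ _ => hS.rightEnds_lt_leftEnds_of_lt hreg, EReal.tendsto_coe.mp hL, hκL, ?_⟩
  ext x
  constructor
  · intro hx
    rcases le_or_gt x p with hxp | hxp
    exacts [.inr ⟨hS.lt_of_mem x hx, hxp⟩, .inl (hcover x hx (EReal.coe_lt_coe_iff.mpr hxp))]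
  · rintro (hx | ⟨hκx, hxp⟩)
    exacts [hsub hx, hS.mem_of_forall_lt_leftEnds hreg hκx fun n => hxp.trans_lt (hp_lt n)]

end Infinite

end IsSackerSellSet

/-- Structure theorem for the Sacker–Sell spectrum (topological content).  Let `Σ ⊆ (κ, S]`
be a closed set of reals such that to the right of any point `c ∉ Σ` with `c > κ` the set
`Σ ∩ [c, ∞)` is a finite union of closed intervals.  If `Σ` is nonempty and is not a finite
union of the forms `⋃ [aₙ,bₙ]` or `⋃ [aₙ,bₙ] ∪ (κ,c]`, then `Σ` is a countable union
`⋃ₙ [aₙ,bₙ]` of ordered intervals with `aₙ → κ`, or such a union together with a tail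
`(κ, b∞]` where `b∞ = lim aₙ > κ`. -/
theorem sacker_sell_structure (Sp : Set ℝ) (κ : EReal) (S : ℝ)
    (hclosed : IsClosed Sp)
    (hsub : ∀ x ∈ Sp, κ < (x : EReal) ∧ x ≤ S)
    (hfin : ∀ c : ℝ, κ < (c : EReal) → c ∉ Sp →
      ∃ (k : ℕ) (a b : Fin k → ℝ), (∀ i, a i ≤ b i) ∧
        Sp ∩ Ici c = ⋃ i, Icc (a i) (b i))
    (hne : Sp.Nonempty)
    (hnot₂ : ¬ ∃ (k : ℕ) (a b : Fin k → ℝ), (∀ i, a i ≤ b i) ∧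
        (∀ i j, i < j → b j < a i) ∧ (∀ i, κ < (a i : EReal)) ∧
        Sp = ⋃ i, Icc (a i) (b i))
    (hnot₃ : ¬ ∃ (k : ℕ) (a b : Fin k → ℝ) (c : ℝ), (∀ i, a i ≤ b i) ∧
        (∀ i j, i < j → b j < a i) ∧ κ < (c : EReal) ∧ (∀ i, c < a i) ∧
        Sp = (⋃ i, Icc (a i) (b i)) ∪ {x : ℝ | κ < (x : EReal) ∧ x ≤ c}) :
    (∃ a b : ℕ → ℝ, (∀ n, a n ≤ b n) ∧ (∀ n m, n < m → b m < a n) ∧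
        Tendsto (fun n => ((a n : ℝ) : EReal)) atTop (nhds κ) ∧
        Sp = ⋃ n, Icc (a n) (b n)) ∨
      (∃ (a b : ℕ → ℝ) (binf : ℝ), (∀ n, a n ≤ b n) ∧ (∀ n m, n < m → b m < a n) ∧
        Tendsto a atTop (nhds binf) ∧ κ < (binf : EReal) ∧
        Sp = (⋃ n, Icc (a n) (b n)) ∪ {x : ℝ | κ < (x : EReal) ∧ x ≤ binf}) := by
  have hS : IsSackerSellSet Sp κ :=
    ⟨hclosed, ⟨S, fun x hx => (hsub x hx).2⟩, hne, fun x hx => (hsub x hx).1,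
      fun c hc hcs => let ⟨k, a, b, _, h⟩ := hfin c hc hcs; ⟨k, a, b, h⟩⟩
  have hreg : ∀ n, HasNextComponent Sp n := by
    intro n
    induction n using Nat.strong_induction_on with
    | _ n ih =>
      by_cases hn : BddBelow {y | Icc y (rightEnds Sp n) ⊆ Sp}
      · exact ⟨hn, nonempty_iff_ne_empty.mpr fun h =>
          hnot₂ (hS.exists_iUnion_Icc_of_inter_Iio_eq_empty ih hn h)⟩
      · exact (hnot₃ (hS.exists_iUnion_Icc_union_of_not_bddBelow ih hn)).elim
  exact hS.eq_iUnion_Icc_or_eq_iUnion_Icc_union hreg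
end
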